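/- arXiv:math/0211002 — 2 statements merged into one kernel-verified Lean document; each statement's English description precedes it below -/
import Mathlib

section
/- The map S defined by (S f)(x,y,r) = (e^{2λr})ⁿ ē[η_λ(r) β(x,y)] f(−e^{λr}x, −e^{λr}y, −r) is anti-multiplicative for the twisted convolution product: S(f × g) = S(g) × S(f) for all f, g ∈ 𝒜. -/
open MeasureTheory
noncomputable section

/-- ℝⁿ -/
abbrev Rn (n : ℕ) := Fin n → ℝ

/-- η_λ(r) = (e^{2λr} − 1)/(2λ) -/
def eta (l r : ℝ) : ℝ := (Real.exp (2 * l * r) - 1) / (2 * l)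

/-- ē(t) = e^{−2πit} -/
def ebar (t : ℝ) : ℂ := Complex.exp (-2 * Real.pi * t * Complex.I)

/-- standard inner product β on ℝⁿ -/
def beta {n : ℕ} (x y : Rn n) : ℝ := ∑ i, x i * y i

/-- membership in 𝒜: Schwartz in (x,y,r), compactly supported in r -/
def IsA {n : ℕ} (f : Rn n → Rn n → ℝ → ℂ) : Prop :=
  (∃ F : SchwartzMap ((Rn n × Rn n) × ℝ) ℂ, ∀ x y r, f x y r = F ((x, y), r)) ∧
  (∃ C : ℝ, ∀ x y r, f x y r ≠ 0 → |r| ≤ C)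

/-- twisted convolution product -/
def tMul {n : ℕ} (l : ℝ) (f g : Rn n → Rn n → ℝ → ℂ) : Rn n → Rn n → ℝ → ℂ :=
  fun x y r => ∫ xt : Rn n, ∫ yt : Rn n,
    f xt yt r * g (x - xt) (y - yt) r * ebar (eta l r * beta xt (y - yt))

/-- twisted involution -/
def tStar {n : ℕ} (l : ℝ) (f : Rn n → Rn n → ℝ → ℂ) : Rn n → Rn n → ℝ → ℂ :=
  fun x y r => (starRingEnd ℂ) (f (-x) (-y) r) * ebar (eta l r * beta x y)

/-- φ(f) = ∫ f(0,0,r) dr -/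
def PhiF {n : ℕ} (f : Rn n → Rn n → ℝ → ℂ) : ℂ := ∫ r : ℝ, f 0 0 r

/-- continuous with compact support (as a function of all variables) -/
def CC {n : ℕ} (ξ : Rn n → Rn n → ℝ → ℂ) : Prop :=
  Continuous (fun p : (Rn n × Rn n) × ℝ => ξ p.1.1 p.1.2 p.2) ∧
  HasCompactSupport (fun p : (Rn n × Rn n) × ℝ => ξ p.1.1 p.1.2 p.2)

/-- L² inner product ⟨f,g⟩ (linear in the first variable, conjugate in the second) -/
def ip {n : ℕ} (f g : Rn n → Rn n → ℝ → ℂ) : ℂ :=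
  ∫ x : Rn n, ∫ y : Rn n, ∫ r : ℝ, f x y r * (starRingEnd ℂ) (g x y r)

/-- the regular representation L_f ξ (same integral formula as the twisted product) -/
def Lop {n : ℕ} (l : ℝ) (f ξ : Rn n → Rn n → ℝ → ℂ) : Rn n → Rn n → ℝ → ℂ :=
  tMul l f ξ

/-- the antipode S on 𝒜 -/
def Smap {n : ℕ} (l : ℝ) (f : Rn n → Rn n → ℝ → ℂ) : Rn n → Rn n → ℝ → ℂ :=
  fun x y r => (((Real.exp (2 * l * r)) ^ n : ℝ) : ℂ) * ebar (eta l r * beta x y) *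
    f (-(Real.exp (l * r) • x)) (-(Real.exp (l * r) • y)) (-r)

/-! Substituting `x̃ = x + e^{-λr} u`, `ỹ = y + e^{-λr} v` in `S g × S f` turns the arguments of
`f` and `g` into those occurring in `S (f × g)`. The Jacobian `e^{-2nλr}` cancels one of the two
factors `(e^{2λr})ⁿ`, and, since `η_λ(-r) = -e^{-2λr} η_λ(r)`, the three phases of `S g × S f`
add up to the two phases of `S (f × g)`. No integrability is needed: an affine change of variables
transforms Bochner integrals exactly, integrable or not. -/

open Module

lemma ebar_add (s t : ℝ) : ebar (s + t) = ebar s * ebar t := by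
  simp only [ebar, ← Complex.exp_add]
  push_cast
  ring_nf

lemma beta_eq_dotProduct {n : ℕ} (x y : Rn n) : beta x y = x ⬝ᵥ y := rfl

lemma eta_neg (l r : ℝ) : eta l (-r) = -(Real.exp (l * r))⁻¹ ^ 2 * eta l r := by
  have hsq : Real.exp (l * r) ^ 2 = Real.exp (2 * l * r) := by
    rw [sq, ← Real.exp_add]; ring_nf
  have hneg : Real.exp (2 * l * -r) = (Real.exp (2 * l * r))⁻¹ := by
    rw [← Real.exp_neg]; ring_nf
  rw [inv_pow, hsq, eta, eta, hneg]
  field_simp [(Real.exp_pos (2 * l * r)).ne']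
  ring

lemma beta_phase_add_inv_smul {n : ℕ} {a : ℝ} (ha : a ≠ 0) (x y u v : Rn n) :
    beta (x + a⁻¹ • u) (y + a⁻¹ • v) + beta (-(a⁻¹ • u)) (-(a⁻¹ • v)) +
        beta (x + a⁻¹ • u) (-(a⁻¹ • v)) =
      beta x y - a⁻¹ ^ 2 * beta u (-(a • y) - v) := by
  simp only [beta_eq_dotProduct, add_dotProduct, dotProduct_add, neg_dotProduct, dotProduct_neg,
    dotProduct_sub, smul_dotProduct, dotProduct_smul, smul_eq_mul]
  field_simp
  ring

section ChangeOfVariables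

variable {E E' F : Type*} [NormedAddCommGroup E] [NormedSpace ℝ E] [MeasurableSpace E]
  [BorelSpace E] [FiniteDimensional ℝ E] (μ : Measure E) [μ.IsAddHaarMeasure]
  [NormedAddCommGroup E'] [NormedSpace ℝ E'] [MeasurableSpace E'] [BorelSpace E']
  [FiniteDimensional ℝ E'] (ν : Measure E') [ν.IsAddHaarMeasure]
  [NormedAddCommGroup F] [NormedSpace ℝ F]

theorem integral_comp_add_inv_smul (φ : E → F) (x : E) {a : ℝ} (ha : 0 ≤ a) :
    ∫ u, φ (x + a⁻¹ • u) ∂μ = a ^ finrank ℝ E • ∫ u, φ u ∂μ := by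
  rw [Measure.integral_comp_inv_smul_of_nonneg μ (fun w => φ (x + w)) ha, integral_add_left_eq_self]

theorem integral_integral_comp_add_inv_smul (Φ : E → E' → F) (x : E) (y : E') {a : ℝ}
    (ha : 0 ≤ a) :
    ∫ u, ∫ v, Φ (x + a⁻¹ • u) (y + a⁻¹ • v) ∂ν ∂μ =
      (a ^ finrank ℝ E * a ^ finrank ℝ E') • ∫ u, ∫ v, Φ u v ∂ν ∂μ := by
  simp_rw [integral_comp_add_inv_smul ν _ y ha, integral_smul,
    integral_comp_add_inv_smul μ (fun u => ∫ v, Φ u v ∂ν) x ha, smul_smul, mul_comm]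

end ChangeOfVariables

section Antipode

variable {n : ℕ} (l : ℝ) (f g : Rn n → Rn n → ℝ → ℂ)

lemma Smap_mul_Smap_comp_add_inv_smul (x y u v : Rn n) (r : ℝ) :
    Smap l g (x + (Real.exp (l * r))⁻¹ • u) (y + (Real.exp (l * r))⁻¹ • v) r *
        Smap l f (x - (x + (Real.exp (l * r))⁻¹ • u)) (y - (y + (Real.exp (l * r))⁻¹ • v)) r *
        ebar (eta l r * beta (x + (Real.exp (l * r))⁻¹ • u) (y - (y + (Real.exp (l * r))⁻¹ • v)))
      = (Real.exp (l * r) ^ n * Real.exp (l * r) ^ n : ℝ) •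
        (((Real.exp (2 * l * r) ^ n : ℝ) : ℂ) * ebar (eta l r * beta x y) *
          (f u v (-r) * g (-(Real.exp (l * r) • x) - u) (-(Real.exp (l * r) • y) - v) (-r) *
            ebar (eta l (-r) * beta u (-(Real.exp (l * r) • y) - v)))) := by
  set a := Real.exp (l * r) with ha_def
  have ha : a ≠ 0 := (Real.exp_pos _).ne'
  have hsq : Real.exp (2 * l * r) = a ^ 2 := by rw [sq, ← Real.exp_add]; ring_nf
  have hsub : ∀ w z : Rn n, w - (w + a⁻¹ • z) = -(a⁻¹ • z) := fun w z => by abel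
  have hscale : ∀ w z : Rn n, -(a • (w + a⁻¹ • z)) = -(a • w) - z := fun w z => by
    rw [smul_add, smul_smul, mul_inv_cancel₀ ha, one_smul, neg_add']
  have hunscale : ∀ z : Rn n, -(a • -(a⁻¹ • z)) = z := fun z => by
    rw [smul_neg, neg_neg, smul_smul, mul_inv_cancel₀ ha, one_smul]
  have hphase : eta l r * beta (x + a⁻¹ • u) (y + a⁻¹ • v) +
      eta l r * beta (-(a⁻¹ • u)) (-(a⁻¹ • v)) + eta l r * beta (x + a⁻¹ • u) (-(a⁻¹ • v)) =
      eta l r * beta x y + eta l (-r) * beta u (-(a • y) - v) := by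
    rw [eta_neg, ← ha_def, ← mul_add, ← mul_add, beta_phase_add_inv_smul ha]
    ring
  have hebar : ebar (eta l r * beta x y) * ebar (eta l (-r) * beta u (-(a • y) - v)) =
      ebar (eta l r * beta (x + a⁻¹ • u) (y + a⁻¹ • v)) *
        ebar (eta l r * beta (-(a⁻¹ • u)) (-(a⁻¹ • v))) *
        ebar (eta l r * beta (x + a⁻¹ • u) (-(a⁻¹ • v))) := by
    rw [← ebar_add, ← ebar_add, ← ebar_add, hphase]
  simp only [Smap, hsub, hscale, hunscale, ← ha_def]
  rw [hsq, Complex.real_smul]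
  push_cast
  linear_combination
    -((a : ℂ) ^ 2) ^ n * ((a : ℂ) ^ 2) ^ n * f u v (-r) * g (-(a • x) - u) (-(a • y) - v) (-r) * hebar

end Antipode

theorem Smap_antimul_general {n : ℕ} (l : ℝ) (f g : Rn n → Rn n → ℝ → ℂ) :
    Smap l (tMul l f g) = tMul l (Smap l g) (Smap l f) := by
  funext x y r
  have ha : 0 < Real.exp (l * r) := Real.exp_pos _
  have hJ : (Real.exp (l * r) ^ n * Real.exp (l * r) ^ n : ℝ) ≠ 0 := by positivity
  apply smul_right_injective ℂ hJ
  have hcov := integral_integral_comp_add_inv_smul (volume : Measure (Rn n)) volume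
    (fun xt yt => Smap l g xt yt r * Smap l f (x - xt) (y - yt) r *
      ebar (eta l r * beta xt (y - yt))) x y ha.le
  simp only [finrank_fin_fun, Smap_mul_Smap_comp_add_inv_smul] at hcov
  refine Eq.trans ?_ hcov
  simp only [Smap, tMul, integral_smul, integral_const_mul]

/-- S is anti-multiplicative: S(f × g) = S(g) × S(f) -/
theorem Smap_antimul {n : ℕ} (l : ℝ) (f g : Rn n → Rn n → ℝ → ℂ)
    (hf : IsA f) (hg : IsA g) :
    Smap l (tMul l f g) = tMul l (Smap l g) (Smap l f) :=
  Smap_antimul_general l f g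
end
end

section
/- The operator Ĵ on ℋ = L²(ℝⁿ×ℝⁿ×ℝ) defined by (Ĵξ)(x,y,r) = (e^{λr})ⁿ conj(ξ(e^{λr}x, e^{λr}y, −r)) is an anti-unitary involution: Ĵ is conjugate-linear, Ĵ² = 1, and ⟨Ĵξ, Ĵη⟩ = ⟨η, ξ⟩ for all ξ, η ∈ ℋ. -/
/-!
Write `Φ(v, r) = (e^{λr} • v, -r)` on `ℝ²ⁿ × ℝ`. Then `Ĵξ = e^{nλr} · conj (ξ ∘ Φ)`, and `Φ` is an
involution with Jacobian `e^{2nλr}`. Hence `Ĵ² = 1`, and the integrand of `⟨Ĵξ, Ĵη⟩` is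
`e^{2nλr} · (η · conj ξ) ∘ Φ`, whose integral is `⟨η, ξ⟩` by the change of variables `Φ`.
-/

open MeasureTheory
noncomputable section

/-- the operator Ĵ on ℋ -/
def Jhat {n : ℕ} (l : ℝ) (ξ : Rn n → Rn n → ℝ → ℂ) : Rn n → Rn n → ℝ → ℂ :=
  fun x y r => (((Real.exp (l * r)) ^ n : ℝ) : ℂ) *
    (starRingEnd ℂ) (ξ (Real.exp (l * r) • x) (Real.exp (l * r) • y) (-r))

/-- uncurrying of a three-variable function -/
def unc3 {n : ℕ} (ξ : Rn n → Rn n → ℝ → ℂ) : (Rn n × Rn n) × ℝ → ℂ :=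
  fun p => ξ p.1.1 p.1.2 p.2

open Module
open scoped ENNReal NNReal

section ScaleFlip

variable {E : Type*} [NormedAddCommGroup E] [NormedSpace ℝ E]

def scaleFlip (l : ℝ) (p : E × ℝ) : E × ℝ := (Real.exp (l * p.2) • p.1, -p.2)

theorem scaleFlip_involutive (l : ℝ) : Function.Involutive (scaleFlip (E := E) l) := by
  rintro ⟨v, r⟩
  simp only [scaleFlip, neg_neg, smul_smul, ← Real.exp_add, mul_neg, neg_add_cancel,
    Real.exp_zero, one_smul]

/-- `|det D(scaleFlip l)|`, as a density for `withDensity`. -/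
def scaleFlipJacobian (l : ℝ) (p : E × ℝ) : ℝ≥0 :=
  (Real.exp (l * p.2)).toNNReal ^ finrank ℝ E

variable [MeasurableSpace E]

theorem measurable_scaleFlipJacobian (l : ℝ) : Measurable (scaleFlipJacobian (E := E) l) := by
  unfold scaleFlipJacobian; fun_prop

variable [BorelSpace E] [FiniteDimensional ℝ E]

theorem measurable_scaleFlip (l : ℝ) : Measurable (scaleFlip (E := E) l) := by
  unfold scaleFlip; fun_prop

def scaleFlipEquiv (l : ℝ) : E × ℝ ≃ᵐ E × ℝ :=
  MeasurableEquiv.ofInvolutive _ (scaleFlip_involutive l) (measurable_scaleFlip l)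

variable (μ : Measure E) [μ.IsAddHaarMeasure]

theorem lintegral_ofReal_pow_mul_comp_smul {R : ℝ} (hR : 0 < R) {f : E → ℝ≥0∞}
    (hf : Measurable f) :
    ∫⁻ v, ENNReal.ofReal R ^ finrank ℝ E * f (R • v) ∂μ = ∫⁻ v, f v ∂μ := by
  rw [lintegral_const_mul (f := fun v => f (R • v)) _ (hf.comp (measurable_const_smul R)),
    ← lintegral_map hf (measurable_const_smul R), Measure.map_addHaar_smul μ hR.ne',
    lintegral_smul_measure, smul_eq_mul, ← mul_assoc, ← ENNReal.ofReal_pow hR.le,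
    ← ENNReal.ofReal_mul (by positivity), abs_of_pos (by positivity),
    mul_inv_cancel₀ (by positivity), ENNReal.ofReal_one, one_mul]

/-- Fubini reduces the change of variables to the scaling `v ↦ e^{lr} • v` of each fibre,
followed by the reflection `r ↦ -r` of the base. -/
theorem lintegral_scaleFlipJacobian_mul_comp (l : ℝ) {f : E × ℝ → ℝ≥0∞} (hf : Measurable f) :
    ∫⁻ p, scaleFlipJacobian l p * f (scaleFlip l p) ∂μ.prod volume =
      ∫⁻ p, f p ∂μ.prod volume := by
  have hfl : Measurable fun p => (scaleFlipJacobian l p : ℝ≥0∞) * f (scaleFlip l p) :=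
    (measurable_scaleFlipJacobian l).coe_nnreal_ennreal.mul (hf.comp (measurable_scaleFlip l))
  rw [lintegral_prod_symm _ hfl.aemeasurable, lintegral_prod_symm _ hf.aemeasurable]
  calc ∫⁻ r, ∫⁻ v, (scaleFlipJacobian l (v, r) : ℝ≥0∞) * f (scaleFlip l (v, r)) ∂μ
      = ∫⁻ r, ∫⁻ v, f (v, -r) ∂μ := by
        refine lintegral_congr fun r => ?_
        simp only [scaleFlipJacobian, scaleFlip, ENNReal.coe_pow]
        exact lintegral_ofReal_pow_mul_comp_smul μ (Real.exp_pos _) (f := fun v => f (v, -r))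
          (hf.comp (measurable_id.prodMk measurable_const))
    _ = ∫⁻ r, ∫⁻ v, f (v, r) ∂μ :=
        (Measure.measurePreserving_neg volume).lintegral_comp hf.lintegral_prod_left'

theorem measurePreserving_scaleFlip (l : ℝ) :
    MeasurePreserving (scaleFlip l)
      ((μ.prod volume).withDensity fun p => scaleFlipJacobian l p) (μ.prod volume) := by
  refine ⟨measurable_scaleFlip l, Measure.ext fun s hs => ?_⟩
  rw [Measure.map_apply (measurable_scaleFlip l) hs,
    withDensity_apply _ (measurable_scaleFlip l hs), ← lintegral_indicator_one hs,
    ← lintegral_scaleFlipJacobian_mul_comp μ l (measurable_one.indicator hs),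
    ← lintegral_indicator (measurable_scaleFlip l hs)]
  congr 1 with p
  by_cases hp : scaleFlip l p ∈ s <;> simp [hp]

variable {G : Type*} [NormedAddCommGroup G] [NormedSpace ℝ G]

theorem integral_scaleFlipJacobian_smul_comp (l : ℝ) (f : E × ℝ → G) :
    ∫ p, scaleFlipJacobian l p • f (scaleFlip l p) ∂μ.prod volume = ∫ p, f p ∂μ.prod volume := by
  rw [← integral_withDensity_eq_integral_smul (measurable_scaleFlipJacobian l)]
  exact (measurePreserving_scaleFlip μ l).integral_comp (scaleFlipEquiv l).measurableEmbedding f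

theorem integrable_scaleFlipJacobian_smul_comp_iff (l : ℝ) {f : E × ℝ → G} :
    Integrable (fun p => scaleFlipJacobian l p • f (scaleFlip l p)) (μ.prod volume) ↔
      Integrable f (μ.prod volume) := by
  rw [← integrable_withDensity_iff_integrable_smul (measurable_scaleFlipJacobian l)]
  exact (measurePreserving_scaleFlip μ l).integrable_comp_emb (scaleFlipEquiv l).measurableEmbedding

end ScaleFlip

theorem integral_prod_prod {α β γ G : Type*} [MeasurableSpace α] [MeasurableSpace β]
    [MeasurableSpace γ] [NormedAddCommGroup G] [NormedSpace ℝ G] (μ : Measure α) (ν : Measure β)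
    (ρ : Measure γ) [SFinite μ] [SFinite ν] [SFinite ρ] {H : (α × β) × γ → G}
    (hH : Integrable H ((μ.prod ν).prod ρ)) :
    ∫ p, H p ∂(μ.prod ν).prod ρ = ∫ x, ∫ y, ∫ z, H ((x, y), z) ∂ρ ∂ν ∂μ := by
  rw [integral_prod _ hH, integral_prod _ hH.integral_prod_left]

theorem ip_eq_integral {n : ℕ} {f g : Rn n → Rn n → ℝ → ℂ}
    (h : Integrable (fun p => unc3 f p * starRingEnd ℂ (unc3 g p))) :
    ip f g = ∫ p, unc3 f p * starRingEnd ℂ (unc3 g p) :=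
  (integral_prod_prod volume volume volume h).symm

theorem finrank_Rn_prod_Rn (n : ℕ) : finrank ℝ (Rn n × Rn n) = 2 * n := by
  rw [finrank_prod, finrank_fin_fun, two_mul]

-- Instance search does not find `Measure.prod.instIsAddHaarMeasure` here.
instance (n : ℕ) : (volume : Measure (Rn n × Rn n)).IsAddHaarMeasure :=
  Measure.prod.instIsAddHaarMeasure _ _

section Jhat

variable {n : ℕ} (l : ℝ)

theorem unc3_Jhat (ξ : Rn n → Rn n → ℝ → ℂ) (p : (Rn n × Rn n) × ℝ) :
    unc3 (Jhat l ξ) p = (Real.exp (l * p.2) ^ n : ℝ) * starRingEnd ℂ (unc3 ξ (scaleFlip l p)) :=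
  rfl

theorem Jhat_add_mul (a : ℂ) (ξ η : Rn n → Rn n → ℝ → ℂ) :
    Jhat l (fun x y r => a * ξ x y r + η x y r) =
      fun x y r => starRingEnd ℂ a * Jhat l ξ x y r + Jhat l η x y r := by
  funext x y r
  simp only [Jhat, map_add, map_mul]
  ring

theorem Jhat_Jhat (ξ : Rn n → Rn n → ℝ → ℂ) : Jhat l (Jhat l ξ) = ξ := by
  funext x y r
  change unc3 (Jhat l (Jhat l ξ)) ((x, y), r) = unc3 ξ ((x, y), r)
  have hexp : Real.exp (l * r) * Real.exp (l * -r) = 1 := by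
    rw [← Real.exp_add, mul_neg, add_neg_cancel, Real.exp_zero]
  rw [unc3_Jhat, unc3_Jhat, scaleFlip_involutive]
  simp only [scaleFlip, map_mul, Complex.conj_conj, Complex.conj_ofReal, ← mul_assoc,
    ← Complex.ofReal_mul, ← mul_pow, hexp, one_pow, Complex.ofReal_one, one_mul]

theorem unc3_Jhat_mul_conj (ξ η : Rn n → Rn n → ℝ → ℂ) (p : (Rn n × Rn n) × ℝ) :
    unc3 (Jhat l ξ) p * starRingEnd ℂ (unc3 (Jhat l η) p) =
      scaleFlipJacobian l p •
        (unc3 η (scaleFlip l p) * starRingEnd ℂ (unc3 ξ (scaleFlip l p))) := by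
  rw [unc3_Jhat, unc3_Jhat, NNReal.smul_def, Complex.real_smul, scaleFlipJacobian,
    finrank_Rn_prod_Rn, NNReal.coe_pow, Real.coe_toNNReal _ (Real.exp_pos _).le]
  simp only [map_mul, Complex.conj_conj, Complex.conj_ofReal]
  push_cast
  ring

end Jhat

/-- Ĵ is an anti-unitary involution on ℋ -/
theorem Jhat_antiunitary_involution (n : ℕ) (l : ℝ) :
    (∀ (a : ℂ) (ξ η : Rn n → Rn n → ℝ → ℂ),
      Jhat l (fun x y r => a * ξ x y r + η x y r) =
        fun x y r => (starRingEnd ℂ) a * Jhat l ξ x y r + Jhat l η x y r) ∧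
    (∀ ξ : Rn n → Rn n → ℝ → ℂ, Jhat l (Jhat l ξ) = ξ) ∧
    (∀ ξ η : Rn n → Rn n → ℝ → ℂ, MemLp (unc3 ξ) 2 volume → MemLp (unc3 η) 2 volume →
      ip (Jhat l ξ) (Jhat l η) = ip η ξ) := by
  refine ⟨Jhat_add_mul l, Jhat_Jhat l, fun ξ η hξ hη => ?_⟩
  set F : (Rn n × Rn n) × ℝ → ℂ := fun p => unc3 η p * starRingEnd ℂ (unc3 ξ p)
  have hF : Integrable F := hη.integrable_mul hξ.star
  have hJ : (fun p => unc3 (Jhat l ξ) p * starRingEnd ℂ (unc3 (Jhat l η) p)) =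
      fun p => scaleFlipJacobian l p • F (scaleFlip l p) :=
    funext (unc3_Jhat_mul_conj l ξ η)
  have hJF : Integrable fun p => scaleFlipJacobian l p • F (scaleFlip l p) :=
    (integrable_scaleFlipJacobian_smul_comp_iff volume l).2 hF
  rw [ip_eq_integral (hJ ▸ hJF), ip_eq_integral hF, hJ]
  exact integral_scaleFlipJacobian_smul_comp volume l F
end
end
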